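/- Pythagorean identity for diagonal averaging: for any matrix of ordered pairs Y and any Hankel matrix of ordered pairs H, ‖Y − H‖_C² = ‖Y − H*‖_C² + ‖H* − H‖_C², where H* is the antidiagonal average of Y; consequently H* is the unique minimizer of ‖Y − H‖_C over Hankel matrices of ordered pairs. -/

import Mathlib

open Finset

/-- The C-norm of an l×k matrix of ordered pairs (A,B). -/
noncomputable def Cnorm {l k : ℕ} (A B : Fin l → Fin k → ℝ) : ℝ :=
  Real.sqrt ((1/2) * ∑ i : Fin l, ∑ j : Fin k, (A i j ^ 2 + B i j ^ 2))

/-- Hankel matrix of ordered pairs: entries coincide on antidiagonals. -/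
def IsHankel {l k : ℕ} (A B : Fin l → Fin k → ℝ) : Prop :=
  ∀ (i i' : Fin l) (j j' : Fin k), (i : ℕ) + (j : ℕ) = (i' : ℕ) + (j' : ℕ) →
    A i j = A i' j' ∧ B i j = B i' j'

/-- Index pairs on the antidiagonal i + j = s (zero-based). -/
def antidiag (l k s : ℕ) : Finset (Fin l × Fin k) :=
  Finset.univ.filter (fun p => (p.1 : ℕ) + (p.2 : ℕ) = s)

/-- Antidiagonal averaging of a real matrix. -/
noncomputable def diagAvg {l k : ℕ} (A : Fin l → Fin k → ℝ) : Fin l → Fin k → ℝ :=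
  fun i j => (∑ p ∈ antidiag l k ((i : ℕ) + (j : ℕ)), A p.1 p.2) /
    (antidiag l k ((i : ℕ) + (j : ℕ))).card

/-! The residual `A - diagAvg A` sums to zero along every antidiagonal, so it is orthogonal to
every matrix that is constant on antidiagonals, in particular to `diagAvg A - H` for Hankel `H`.
Expanding `‖A - H‖² = ‖(A - diagAvg A) + (diagAvg A - H)‖²` then kills the cross term, and the
strict inequality follows because the C-norm vanishes only at zero. -/

open scoped BigOperators

lemma Finset.sum_sub_expect_eq_zero {ι M : Type*} [AddCommGroup M] [Module ℚ≥0 M]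
    (s : Finset ι) (f : ι → M) : ∑ i ∈ s, (f i - 𝔼 j ∈ s, f j) = 0 := by
  rw [sum_sub_distrib, sum_const, card_smul_expect, sub_self]

def IsHankelMatrix {l k : ℕ} (H : Fin l → Fin k → ℝ) : Prop :=
  ∀ (i i' : Fin l) (j j' : Fin k), (i : ℕ) + (j : ℕ) = (i' : ℕ) + (j' : ℕ) → H i j = H i' j'

lemma isHankel_iff {l k : ℕ} {A B : Fin l → Fin k → ℝ} :
    IsHankel A B ↔ IsHankelMatrix A ∧ IsHankelMatrix B :=
  ⟨fun h => ⟨fun i i' j j' hs => (h i i' j j' hs).1, fun i i' j j' hs => (h i i' j j' hs).2⟩,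
    fun h i i' j j' hs => ⟨h.1 i i' j j' hs, h.2 i i' j j' hs⟩⟩

lemma IsHankelMatrix.sub {l k : ℕ} {G H : Fin l → Fin k → ℝ} (hG : IsHankelMatrix G)
    (hH : IsHankelMatrix H) : IsHankelMatrix (fun i j => G i j - H i j) :=
  fun i i' j j' hs => by simp only [hG i i' j j' hs, hH i i' j j' hs]

@[simp]
lemma mem_antidiag {l k s : ℕ} {p : Fin l × Fin k} :
    p ∈ antidiag l k s ↔ (p.1 : ℕ) + (p.2 : ℕ) = s := by
  simp [antidiag]

lemma isHankelMatrix_diagAvg {l k : ℕ} (A : Fin l → Fin k → ℝ) : IsHankelMatrix (diagAvg A) :=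
  fun i i' j j' hs => by simp only [diagAvg, hs]

lemma diagAvg_eq_expect {l k s : ℕ} (A : Fin l → Fin k → ℝ) {p : Fin l × Fin k}
    (hp : p ∈ antidiag l k s) : diagAvg A p.1 p.2 = 𝔼 q ∈ antidiag l k s, A q.1 q.2 := by
  rw [diagAvg, mem_antidiag.1 hp, expect_eq_sum_div_card]

lemma sum_eq_sum_antidiag {l k : ℕ} (f : Fin l → Fin k → ℝ) :
    ∑ i, ∑ j, f i j = ∑ s ∈ range (l + k), ∑ p ∈ antidiag l k s, f p.1 p.2 := by
  rw [← Fintype.sum_prod_type', ← sum_fiberwise_of_maps_to (t := range (l + k))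
    (g := fun p : Fin l × Fin k => (p.1 : ℕ) + p.2) (fun p _ => mem_range.2 (by omega))]
  rfl

lemma sum_sub_diagAvg_mul_eq_zero {l k : ℕ} (A G : Fin l → Fin k → ℝ) (hG : IsHankelMatrix G) :
    ∑ i, ∑ j, (A i j - diagAvg A i j) * G i j = 0 := by
  rw [sum_eq_sum_antidiag]
  refine sum_eq_zero fun s _ => ?_
  obtain h | ⟨p₀, hp₀⟩ := (antidiag l k s).eq_empty_or_nonempty
  · simp [h]
  have hconst : ∀ p ∈ antidiag l k s, (A p.1 p.2 - diagAvg A p.1 p.2) * G p.1 p.2 =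
      (A p.1 p.2 - 𝔼 q ∈ antidiag l k s, A q.1 q.2) * G p₀.1 p₀.2 := fun p hp => by
    rw [diagAvg_eq_expect A hp, hG _ p₀.1 _ p₀.2 (by rw [mem_antidiag.1 hp, mem_antidiag.1 hp₀])]
  rw [sum_congr rfl hconst, ← sum_mul, sum_sub_expect_eq_zero, zero_mul]

lemma sum_sq_sub_eq_add {l k : ℕ} (A H : Fin l → Fin k → ℝ) (hH : IsHankelMatrix H) :
    ∑ i, ∑ j, (A i j - H i j) ^ 2 =
      ∑ i, ∑ j, (A i j - diagAvg A i j) ^ 2 + ∑ i, ∑ j, (diagAvg A i j - H i j) ^ 2 := by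
  have horth := sum_sub_diagAvg_mul_eq_zero A _ ((isHankelMatrix_diagAvg A).sub hH)
  have hexpand : ∀ i j, (A i j - H i j) ^ 2 = (A i j - diagAvg A i j) ^ 2 +
      (diagAvg A i j - H i j) ^ 2 + 2 * ((A i j - diagAvg A i j) * (diagAvg A i j - H i j)) :=
    fun i j => by ring
  simp only [hexpand, sum_add_distrib, ← mul_sum, horth, mul_zero, add_zero]

lemma Cnorm_sq {l k : ℕ} (X Y : Fin l → Fin k → ℝ) :
    Cnorm X Y ^ 2 = (1/2) * ∑ i, ∑ j, (X i j ^ 2 + Y i j ^ 2) :=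
  Real.sq_sqrt (by positivity)

lemma Cnorm_nonneg {l k : ℕ} (X Y : Fin l → Fin k → ℝ) : 0 ≤ Cnorm X Y :=
  Real.sqrt_nonneg _

lemma Cnorm_pos {l k : ℕ} {X Y : Fin l → Fin k → ℝ} (h : ¬ (X = 0 ∧ Y = 0)) : 0 < Cnorm X Y := by
  refine Real.sqrt_pos.2 (mul_pos one_half_pos ?_)
  contrapose! h
  have hzero : ∀ i j, X i j ^ 2 + Y i j ^ 2 = 0 := fun i j => by
    have hrow := (sum_eq_zero_iff_of_nonneg fun i _ => sum_nonneg fun j _ => by positivity).1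
      (le_antisymm h (by positivity)) i (mem_univ i)
    exact (sum_eq_zero_iff_of_nonneg fun j _ => by positivity).1 hrow j (mem_univ j)
  have hboth := fun i j => (add_eq_zero_iff_of_nonneg (sq_nonneg _) (sq_nonneg _)).1 (hzero i j)
  exact ⟨funext₂ fun i j => pow_eq_zero_iff two_ne_zero |>.1 (hboth i j).1,
    funext₂ fun i j => pow_eq_zero_iff two_ne_zero |>.1 (hboth i j).2⟩

/-- Pythagorean identity for diagonal averaging, and uniqueness of the minimizer. -/
theorem diagAvg_pythagoras {l k : ℕ} (A B HA HB : Fin l → Fin k → ℝ)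
    (hH : IsHankel HA HB) :
    (Cnorm (fun i j => A i j - HA i j) (fun i j => B i j - HB i j)) ^ 2 =
      (Cnorm (fun i j => A i j - diagAvg A i j) (fun i j => B i j - diagAvg B i j)) ^ 2 +
      (Cnorm (fun i j => diagAvg A i j - HA i j) (fun i j => diagAvg B i j - HB i j)) ^ 2 ∧
    (¬ (HA = diagAvg A ∧ HB = diagAvg B) →
      Cnorm (fun i j => A i j - diagAvg A i j) (fun i j => B i j - diagAvg B i j) <
      Cnorm (fun i j => A i j - HA i j) (fun i j => B i j - HB i j)) := by
  obtain ⟨hHA, hHB⟩ := isHankel_iff.1 hH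
  have hpyth : (Cnorm (fun i j => A i j - HA i j) (fun i j => B i j - HB i j)) ^ 2 =
      (Cnorm (fun i j => A i j - diagAvg A i j) (fun i j => B i j - diagAvg B i j)) ^ 2 +
      (Cnorm (fun i j => diagAvg A i j - HA i j) (fun i j => diagAvg B i j - HB i j)) ^ 2 := by
    simp only [Cnorm_sq, sum_add_distrib, sum_sq_sub_eq_add A HA hHA, sum_sq_sub_eq_add B HB hHB]
    ring
  refine ⟨hpyth, fun hne => ?_⟩
  have hgap : 0 < Cnorm (fun i j => diagAvg A i j - HA i j) (fun i j => diagAvg B i j - HB i j) :=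
    Cnorm_pos fun ⟨hA, hB⟩ => hne
      ⟨funext₂ fun i j => (sub_eq_zero.1 (congrFun₂ hA i j)).symm,
        funext₂ fun i j => (sub_eq_zero.1 (congrFun₂ hB i j)).symm⟩
  refine lt_of_pow_lt_pow_left₀ 2 (Cnorm_nonneg _ _) ?_
  rw [hpyth]
  exact lt_add_of_pos_right _ (pow_pos hgap 2)
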